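/- In RLL⊥, the new law of contradiction for complemented subjects holds: for all formulas A and B, the sequent A⊥ ⊸ B, A⊥ ⊗ B⊥ ⊢ B ⊗ B⊥ is provable. -/

import Mathlib

inductive RLLFormula : Type
  | atom : ℕ → RLLFormula
  | bot : RLLFormula
  | tensor : RLLFormula → RLLFormula → RLLFormula
  | limp : RLLFormula → RLLFormula → RLLFormula

namespace RLLFormula

/-- `A⊥` abbreviates `A ⊸ ⊥`. -/
def neg (A : RLLFormula) : RLLFormula := A.limp bot

/-- Provability in the sequent calculus RLL⊥: identity, ⊗L, ⊗R, ⊸L, ⊸R. -/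
inductive Provable : Multiset RLLFormula → RLLFormula → Prop
  | id (A : RLLFormula) : Provable {A} A
  | tensorL {Γ : Multiset RLLFormula} {A B C : RLLFormula} :
      Provable (A ::ₘ B ::ₘ Γ) C → Provable ((A.tensor B) ::ₘ Γ) C
  | tensorR {Γ Δ : Multiset RLLFormula} {A B : RLLFormula} :
      Provable Γ A → Provable Δ B → Provable (Γ + Δ) (A.tensor B)
  | limpL {Γ Δ : Multiset RLLFormula} {A B C : RLLFormula} :
      Provable Γ A → Provable (B ::ₘ Δ) C → Provable ((A.limp B) ::ₘ (Γ + Δ)) C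
  | limpR {Γ : Multiset RLLFormula} {A B : RLLFormula} :
      Provable (A ::ₘ Γ) B → Provable Γ (A.limp B)

end RLLFormula

open RLLFormula

namespace RLLFormula.Provable

theorem limp_elim (A B : RLLFormula) : Provable {A, A.limp B} B := by
  rw [Multiset.pair_comm]
  simpa only [add_zero, Multiset.insert_eq_cons] using limpL (id A) (id B)

theorem tensor_id {Γ : Multiset RLLFormula} {A : RLLFormula} (h : Provable Γ A)
    (B : RLLFormula) : Provable (B ::ₘ Γ) (A.tensor B) := by
  rw [← Multiset.singleton_add, add_comm]
  exact tensorR h (id B)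

end RLLFormula.Provable

theorem stmt18 (A B : RLLFormula) :
    Provable {A.neg.limp B, A.neg.tensor B.neg} (B.tensor B.neg) := by
  have h : Provable (B.neg ::ₘ A.neg ::ₘ {A.neg.limp B}) (B.tensor B.neg) :=
    (Provable.limp_elim A.neg B).tensor_id B.neg
  rw [Multiset.cons_swap] at h
  exact Multiset.pair_comm _ _ ▸ h.tensorL
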